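/- Every instance with any number n of agents (in which every good is positively valued by at least one agent and every good an agent regards as divisible is positively valued by that agent) admits a complete allocation that is both EF1M and non-wasteful. -/
import Mathlib


open scoped BigOperators Classical

/-- An instance of fair division with subjective divisibility: `n` agents and `m` goods,
each good of total amount 1.  Each agent `i` assigns a nonnegative value `v i g` to each
good `g` and regards each good as either divisible or indivisible for her. -/
structure FairDivision (n m : ℕ) where
  /-- agent `i`'s value for good `g` -/
  v : Fin n → Fin m → ℝ
  v_nonneg : ∀ i g, 0 ≤ v i g
  /-- `divisible i g` means agent `i` regards good `g` as divisible -/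
  divisible : Fin n → Fin m → Prop

namespace FairDivision

variable {n m : ℕ}

/-- Agent `i`'s utility from receiving fraction `t ∈ [0,1]` of good `g`:
`t * v i g` if `g` is divisible for `i`; `v i g` if `g` is indivisible for `i` and `t = 1`;
and `0` if `g` is indivisible for `i` and `t < 1`. -/
noncomputable def frUtil (I : FairDivision n m) (i : Fin n) (g : Fin m) (t : ℝ) : ℝ :=
  if I.divisible i g then t * I.v i g else if t = 1 then I.v i g else 0

/-- Agent `i`'s (additive) utility for a bundle `b`, given by the fraction `b g` of each good. -/
noncomputable def util (I : FairDivision n m) (i : Fin n) (b : Fin m → ℝ) : ℝ :=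
  ∑ g, I.frUtil i g (b g)

/-- Agent `i`'s utility for the bundle `b` with good `g` omitted. -/
noncomputable def utilMinus (I : FairDivision n m) (i : Fin n) (b : Fin m → ℝ) (g : Fin m) : ℝ :=
  ∑ g' ∈ Finset.univ.erase g, I.frUtil i g' (b g')

/-- A complete allocation: fractions in `[0,1]` summing to `1` for every good. -/
def IsAllocation (I : FairDivision n m) (x : Fin n → Fin m → ℝ) : Prop :=
  (∀ i g, 0 ≤ x i g ∧ x i g ≤ 1) ∧ ∀ g, ∑ i, x i g = 1

/-- A partial allocation: fractions in `[0,1]` summing to at most `1` for every good. -/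
def IsPartialAllocation (I : FairDivision n m) (x : Fin n → Fin m → ℝ) : Prop :=
  (∀ i g, 0 ≤ x i g ∧ x i g ≤ 1) ∧ ∀ g, ∑ i, x i g ≤ 1

/-- The maximin share of agent `i`: the supremum, over all fractional `n`-partitions
`P` of the goods, of the minimum over the parts `P j` of agent `i`'s utility. -/
noncomputable def MMS (I : FairDivision n m) (i : Fin n) : ℝ :=
  sSup { r : ℝ | ∃ P : Fin n → Fin m → ℝ, I.IsAllocation P ∧ r = ⨅ j, I.util i (P j) }

/-- Non-wastefulness: every positive fraction an agent receives yields her positive utility. -/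
def NonWasteful (I : FairDivision n m) (x : Fin n → Fin m → ℝ) : Prop :=
  ∀ i g, 0 < x i g → 0 < I.frUtil i g (x i g)

/-- Envy-freeness. -/
def EF (I : FairDivision n m) (x : Fin n → Fin m → ℝ) : Prop :=
  ∀ i j, I.util i (x j) ≤ I.util i (x i)

/-- Envy-freeness for mixed goods: for all agents `i, j`, if every good `j` receives a
positive fraction of is indivisible for `i`, then `i` does not envy `j` after removing some
such good from `j`'s bundle; otherwise `i` does not envy `j`. -/
def EFM (I : FairDivision n m) (x : Fin n → Fin m → ℝ) : Prop :=
  ∀ i j,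
    ((∀ g, 0 < x j g → ¬ I.divisible i g) →
      ∃ g, 0 < x j g ∧ I.utilMinus i (x j) g ≤ I.util i (x i)) ∧
    ((¬ ∀ g, 0 < x j g → ¬ I.divisible i g) → I.util i (x j) ≤ I.util i (x i))

/-- EFXM: as EFM, but the envy must vanish after removing any positively valued such good. -/
def EFXM (I : FairDivision n m) (x : Fin n → Fin m → ℝ) : Prop :=
  ∀ i j,
    ((∀ g, 0 < x j g → ¬ I.divisible i g) →
      ∀ g, 0 < x j g → 0 < I.v i g → I.utilMinus i (x j) g ≤ I.util i (x i)) ∧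
    ((¬ ∀ g, 0 < x j g → ¬ I.divisible i g) → I.util i (x j) ≤ I.util i (x i))

/-- EF1M: if `j`'s bundle contains (a positive fraction of) some good that `i` regards as
indivisible and values positively, the envy of `i` must vanish after removing some such good;
otherwise `i` does not envy `j`. -/
def EF1M (I : FairDivision n m) (x : Fin n → Fin m → ℝ) : Prop :=
  ∀ i j,
    ((∃ g, 0 < x j g ∧ ¬ I.divisible i g ∧ 0 < I.v i g) →
      ∃ g, 0 < x j g ∧ ¬ I.divisible i g ∧ 0 < I.v i g ∧
        I.utilMinus i (x j) g ≤ I.util i (x i)) ∧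
    ((¬ ∃ g, 0 < x j g ∧ ¬ I.divisible i g ∧ 0 < I.v i g) → I.util i (x j) ≤ I.util i (x i))

/-- Pareto optimality (among complete allocations). -/
def ParetoOptimal (I : FairDivision n m) (x : Fin n → Fin m → ℝ) : Prop :=
  ¬ ∃ y, I.IsAllocation y ∧ (∀ i, I.util i (x i) ≤ I.util i (y i)) ∧
    ∃ i, I.util i (x i) < I.util i (y i)

/-- In a 3-agent instance, `B` (a set of whole goods) is a reducible bundle with respect to
agent `i`: `u_i(B) ≥ (2/3)·MMS_i`, `u_j(M∖B) ≥ 2·MMS_j` for some agent `j ≠ i`, and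
`u_k(M∖B) ≥ (4/3)·MMS_k` for the remaining agent `k`. -/
def IsReducible (I : FairDivision 3 m) (B : Finset (Fin m)) (i : Fin 3) : Prop :=
  2 / 3 * I.MMS i ≤ ∑ g ∈ B, I.v i g ∧
    ∃ j, j ≠ i ∧ 2 * I.MMS j ≤ ∑ g ∈ Bᶜ, I.v j g ∧
      ∀ k, k ≠ i → k ≠ j → 4 / 3 * I.MMS k ≤ ∑ g ∈ Bᶜ, I.v k g

end FairDivision

namespace EF1MAux

open Finset

variable {n m : ℕ}

/-- total value of a set of goods for agent `x` -/
def ub (v : Fin n → Fin m → ℝ) (x : Fin n) (S : Finset (Fin m)) : ℝ := ∑ g ∈ S, v x g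

/-- bundle of agent `x` under assignment `f` -/
def bd (f : Fin m → Option (Fin n)) (x : Fin n) : Finset (Fin m) :=
  Finset.univ.filter (fun g => f g = some x)

lemma mem_bd {f : Fin m → Option (Fin n)} {x : Fin n} {g : Fin m} :
    g ∈ bd f x ↔ f g = some x := by simp [bd]

/-- invariant: eligibility + EF1 with forbidden-removal classes -/
structure Inv (v : Fin n → Fin m → ℝ) (cls : Fin m → Option (Fin n)) (W : Finset (Fin m))
    (f : Fin m → Option (Fin n)) : Prop where
  elig : ∀ g x, f g = some x → g ∈ W ∧ 0 < v x g
  efp : ∀ x y, ub v x (bd f y) ≤ ub v x (bd f x) ∨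
      ∃ h ∈ bd f y, 0 < v x h ∧ cls h ≠ some x ∧
        ub v x ((bd f y).erase h) ≤ ub v x (bd f x)

def Phi (v : Fin n → Fin m → ℝ) (f : Fin m → Option (Fin n)) : ℝ :=
  ∑ x : Fin n, ub v x (bd f x)

section UB
variable {v : Fin n → Fin m → ℝ}

lemma ub_nonneg (hv : ∀ x g, 0 ≤ v x g) (x : Fin n) (S : Finset (Fin m)) : 0 ≤ ub v x S :=
  Finset.sum_nonneg fun g _ => hv x g

lemma ub_mono (hv : ∀ x g, 0 ≤ v x g) (x : Fin n) {S T : Finset (Fin m)} (h : S ⊆ T) : ub v x S ≤ ub v x T :=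
  Finset.sum_le_sum_of_subset_of_nonneg h fun g _ _ => hv x g

lemma ub_filter (hv : ∀ x g, 0 ≤ v x g) (x : Fin n) (S : Finset (Fin m)) :
    ub v x (S.filter (fun h => 0 < v x h)) = ub v x S :=
  Finset.sum_filter_of_ne fun g _ hg => lt_of_le_of_ne (hv x g) (Ne.symm hg)

lemma ub_insert (x : Fin n) {S : Finset (Fin m)} {g : Fin m} (hg : g ∉ S) :
    ub v x (insert g S) = v x g + ub v x S := Finset.sum_insert hg

lemma ub_erase (x : Fin n) {S : Finset (Fin m)} {h : Fin m} (hh : h ∈ S) :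
    ub v x S = ub v x (S.erase h) + v x h := (Finset.sum_erase_add S _ hh).symm

end UB


section Moves

variable {v : Fin n → Fin m → ℝ} {cls : Fin m → Option (Fin n)} {W : Finset (Fin m)}

/-- rotation of bundles: goods owned by `w ∈ O` are transferred to `rmap w`
(dropping goods the new owner does not positively value). -/
noncomputable def rot (v : Fin n → Fin m → ℝ) (f : Fin m → Option (Fin n)) (O : Finset (Fin n))
    (rmap : Fin n → Fin n) : Fin m → Option (Fin n) := fun h =>
  (f h).elim none (fun w => if w ∈ O then
      (if 0 < v (rmap w) h then some (rmap w) else none) else some w)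

lemma rot_eq_some {f : Fin m → Option (Fin n)} {O : Finset (Fin n)} {rmap : Fin n → Fin n}
    {h : Fin m} {y : Fin n} :
    rot v f O rmap h = some y ↔
      (∃ w, f h = some w ∧ ((w ∈ O ∧ 0 < v (rmap w) h ∧ rmap w = y) ∨ (w ∉ O ∧ w = y))) := by
  cases hfh : f h with
  | none => simp [rot, hfh]
  | some w =>
    simp only [rot, hfh, Option.elim_some, Option.some.injEq]
    by_cases hw : w ∈ O
    · by_cases hp : 0 < v (rmap w) h
      · simp only [if_pos hw, if_pos hp, Option.some.injEq]
        constructor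
        · intro hh; exact ⟨w, rfl, Or.inl ⟨hw, hp, hh⟩⟩
        · rintro ⟨w', hw', hc⟩
          subst hw'
          rcases hc with ⟨_, _, h3⟩ | ⟨h1, _⟩
          · exact h3
          · exact absurd hw h1
      · simp only [if_pos hw, if_neg hp]
        constructor
        · intro hh; exact absurd hh (by simp)
        · rintro ⟨w', hw', hc⟩
          subst hw'
          rcases hc with ⟨_, h2, _⟩ | ⟨h1, _⟩
          · exact absurd h2 hp
          · exact absurd hw h1
    · simp only [if_neg hw, Option.some.injEq]
      constructor
      · intro hh; exact ⟨w, rfl, Or.inr ⟨hw, hh⟩⟩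
      · rintro ⟨w', hw', hc⟩
        subst hw'
        rcases hc with ⟨h1, _, _⟩ | ⟨_, h2⟩
        · exact absurd h1 hw
        · exact h2

variable {f : Fin m → Option (Fin n)} {O : Finset (Fin n)} {t rmap : Fin n → Fin n}

lemma bd_rot_mem (htO : ∀ w ∈ O, t w ∈ O) (hrt : ∀ w ∈ O, rmap (t w) = w)
    (htr : ∀ w ∈ O, t (rmap w) = w) {y : Fin n} (hy : y ∈ O) :
    bd (rot v f O rmap) y = (bd f (t y)).filter (fun h => 0 < v y h) := by
  ext h
  simp only [mem_bd, rot_eq_some, mem_filter]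
  constructor
  · rintro ⟨w, hfw, ⟨hwO, hp, hwy⟩ | ⟨hwO, rfl⟩⟩
    · have hwt : w = t y := by rw [← hwy, htr w hwO]
      rw [hwt] at hfw hp
      rw [hrt y hy] at hp
      exact ⟨hfw, hp⟩
    · exact absurd hy hwO
  · rintro ⟨hmem, hp⟩
    refine ⟨t y, hmem, Or.inl ⟨htO y hy, ?_, hrt y hy⟩⟩
    rw [hrt y hy]; exact hp

lemma bd_rot_not_mem (hrO : ∀ w ∈ O, rmap w ∈ O) {y : Fin n} (hy : y ∉ O) :
    bd (rot v f O rmap) y = bd f y := by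
  ext h
  simp only [mem_bd, rot_eq_some]
  constructor
  · rintro ⟨w, hfw, ⟨hwO, hp, hwy⟩ | ⟨hwO, rfl⟩⟩
    · exact absurd (hwy ▸ hrO w hwO) hy
    · exact hfw
  · intro hf
    exact ⟨y, hf, Or.inr ⟨hy, rfl⟩⟩


/-- key transfer: EF1P bound for a subbundle of an old bundle. -/
lemma lift (hv : ∀ x g, 0 ≤ v x g) (hf : Inv v cls W f) (x w : Fin n) {B : Finset (Fin m)}
    (hB : B ⊆ bd f w) {U : ℝ} (hU : ub v x (bd f x) ≤ U) :
    ub v x B ≤ U ∨ ∃ h ∈ B, 0 < v x h ∧ cls h ≠ some x ∧ ub v x (B.erase h) ≤ U := by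
  rcases hf.efp x w with hle | ⟨h, hh, hp, hcl, hle⟩
  · exact Or.inl ((ub_mono hv x hB).trans (hle.trans hU))
  · by_cases hhB : h ∈ B
    · exact Or.inr ⟨h, hhB, hp, hcl,
        (ub_mono hv x (Finset.erase_subset_erase _ hB)).trans (hle.trans hU)⟩
    · refine Or.inl ?_
      have hBe : B ⊆ (bd f w).erase h := Finset.subset_erase.2 ⟨hB, hhB⟩
      exact (ub_mono hv x hBe).trans (hle.trans hU)

lemma rot_move (hv : ∀ x g, 0 ≤ v x g) (hf : Inv v cls W f) (hO : O.Nonempty)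
    (htO : ∀ w ∈ O, t w ∈ O) (hrO : ∀ w ∈ O, rmap w ∈ O)
    (hrt : ∀ w ∈ O, rmap (t w) = w) (htr : ∀ w ∈ O, t (rmap w) = w)
    (henv : ∀ x ∈ O, ub v x (bd f x) < ub v x (bd f (t x))) :
    ∃ f', Inv v cls W f' ∧ Phi v f < Phi v f' := by
  set f' := rot v f O rmap with hf'
  have hbdO : ∀ y ∈ O, bd f' y = (bd f (t y)).filter (fun h => 0 < v y h) :=
    fun y hy => bd_rot_mem htO hrt htr hy
  have hbdN : ∀ y, y ∉ O → bd f' y = bd f y := fun y hy => bd_rot_not_mem hrO hy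
  have hubO : ∀ y ∈ O, ub v y (bd f' y) = ub v y (bd f (t y)) := by
    intro y hy; rw [hbdO y hy, ub_filter hv]
  have hown : ∀ x, ub v x (bd f x) ≤ ub v x (bd f' x) := by
    intro x
    by_cases hx : x ∈ O
    · rw [hubO x hx]; exact (henv x hx).le
    · rw [hbdN x hx]
  refine ⟨f', ⟨?_, ?_⟩, ?_⟩
  · intro h x hfx
    rcases rot_eq_some.1 hfx with ⟨w, hfw, ⟨hwO, hp, hwy⟩ | ⟨hwO, rfl⟩⟩
    · exact ⟨(hf.elig h w hfw).1, hwy ▸ hp⟩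
    · exact hf.elig h w hfw
  · intro x y
    by_cases hxy : x = y
    · subst hxy; exact Or.inl le_rfl
    by_cases hyO : y ∈ O
    · rw [hbdO y hyO]
      exact lift hv hf x (t y) (Finset.filter_subset _ _) (hown x)
    · rw [hbdN y hyO]
      exact lift hv hf x y (Finset.Subset.refl _) (hown x)
  · obtain ⟨x0, hx0⟩ := hO
    refine Finset.sum_lt_sum (fun x _ => hown x) ⟨x0, Finset.mem_univ x0, ?_⟩
    rw [hubO x0 hx0]
    exact henv x0 hx0

/-- rotation with an extra good handed to recipient `ρ`. -/
noncomputable def gmov (v : Fin n → Fin m → ℝ) (f : Fin m → Option (Fin n))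
    (O : Finset (Fin n)) (rmap : Fin n → Fin n) (g : Fin m) (ρ : Fin n) :
    Fin m → Option (Fin n) :=
  fun h => if h = g then some ρ else rot v f O rmap h

lemma rot_none_at (hgf : f g = none) : rot v f O rmap g = none := by
  simp [rot, hgf]

lemma bd_gmov {g : Fin m} {ρ : Fin n} (hgf : f g = none) (y : Fin n) :
    bd (gmov v f O rmap g ρ) y =
      if y = ρ then insert g (bd (rot v f O rmap) y) else bd (rot v f O rmap) y := by
  have hkey : ∀ h, gmov v f O rmap g ρ h = some y ↔
      ((h = g ∧ y = ρ) ∨ (h ≠ g ∧ rot v f O rmap h = some y)) := by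
    intro h
    unfold gmov
    by_cases hh : h = g
    · simp only [if_pos hh, Option.some.injEq]
      constructor
      · intro hc; exact Or.inl ⟨hh, hc.symm⟩
      · rintro (⟨_, hc⟩ | ⟨hc, _⟩)
        · exact hc.symm
        · exact absurd hh hc
    · simp only [if_neg hh]
      constructor
      · intro hc; exact Or.inr ⟨hh, hc⟩
      · rintro (⟨hc, _⟩ | ⟨_, hc⟩)
        · exact absurd hc hh
        · exact hc
  ext h
  by_cases hy : y = ρ
  · rw [if_pos hy, Finset.mem_insert, mem_bd, hkey, mem_bd]
    constructor
    · rintro (⟨hc, _⟩ | ⟨_, hc⟩)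
      · exact Or.inl hc
      · exact Or.inr hc
    · rintro (hc | hc)
      · exact Or.inl ⟨hc, hy⟩
      · refine Or.inr ⟨?_, hc⟩
        rintro rfl
        rw [rot_none_at hgf] at hc
        exact absurd hc (by simp)
    
  · rw [if_neg hy, mem_bd, hkey, mem_bd]
    constructor
    · rintro (⟨_, hc⟩ | ⟨_, hc⟩)
      · exact absurd hc hy
      · exact hc
    · intro hc
      refine Or.inr ⟨?_, hc⟩
      rintro rfl
      rw [rot_none_at hgf] at hc
      exact absurd hc (by simp)

lemma gmov_move (hv : ∀ x g, 0 ≤ v x g) (hf : Inv v cls W f) {ρ : Fin n} (hρ : ρ ∈ O)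
    (htO : ∀ w ∈ O, t w ∈ O) (hrO : ∀ w ∈ O, rmap w ∈ O)
    (hrt : ∀ w ∈ O, rmap (t w) = w) (htr : ∀ w ∈ O, t (rmap w) = w)
    {g : Fin m} (hgW : g ∈ W) (hgf : f g = none) (hvg : 0 < v ρ g)
    (henv : ∀ x ∈ O, x ≠ ρ → ub v x (bd f x) < ub v x (bd f (t x)))
    (hmargin : ub v ρ (bd f ρ) < ub v ρ (bd f (t ρ)) + v ρ g)
    (hpairs : ∀ x, x ≠ ρ → 0 < v x g →
      (cls g ≠ some x ∧ ub v x (bd f (t ρ)) ≤ ub v x (bd f x)) ∨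
      (ub v x (bd f (t ρ)) + v x g ≤ ub v x (bd f x))) :
    ∃ f', Inv v cls W f' ∧ Phi v f < Phi v f' := by
  set f' := gmov v f O rmap g ρ with hf'def
  have hgrot : ∀ y, g ∉ bd (rot v f O rmap) y := by
    intro y hy; rw [mem_bd, rot_none_at hgf] at hy; exact absurd hy (by simp)
  have hbdρ : bd f' ρ = insert g (bd (rot v f O rmap) ρ) := by
    rw [hf'def, bd_gmov hgf, if_pos rfl]
  have hbdy : ∀ y, y ≠ ρ → bd f' y = bd (rot v f O rmap) y := by
    intro y hy; rw [hf'def, bd_gmov hgf, if_neg hy]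
  have hbdO : ∀ y ∈ O, bd (rot v f O rmap) y = (bd f (t y)).filter (fun h => 0 < v y h) :=
    fun y hy => bd_rot_mem htO hrt htr hy
  have hbdN : ∀ y, y ∉ O → bd (rot v f O rmap) y = bd f y := fun y hy => bd_rot_not_mem hrO hy
  have hubO : ∀ y ∈ O, ub v y (bd (rot v f O rmap) y) = ub v y (bd f (t y)) := by
    intro y hy; rw [hbdO y hy, ub_filter hv]
  have hownρ : ub v ρ (bd f ρ) < ub v ρ (bd f' ρ) := by
    rw [hbdρ, ub_insert ρ (hgrot ρ), hubO ρ hρ]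
    linarith [hmargin]
  have hown : ∀ x, ub v x (bd f x) ≤ ub v x (bd f' x) := by
    intro x
    by_cases hxρ : x = ρ
    · subst hxρ; exact hownρ.le
    rw [hbdy x hxρ]
    by_cases hx : x ∈ O
    · rw [hubO x hx]; exact (henv x hx hxρ).le
    · rw [hbdN x hx]
  refine ⟨f', ⟨?_, ?_⟩, ?_⟩
  · intro h x hfx
    rw [hf'def] at hfx
    unfold gmov at hfx
    by_cases hh : h = g
    · rw [if_pos hh] at hfx
      have : ρ = x := by injection hfx
      subst hh; subst this
      exact ⟨hgW, hvg⟩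
    · rw [if_neg hh] at hfx
      rcases rot_eq_some.1 hfx with ⟨w, hfw, ⟨hwO, hp, hwy⟩ | ⟨hwO, rfl⟩⟩
      · exact ⟨(hf.elig h w hfw).1, hwy ▸ hp⟩
      · exact hf.elig h w hfw
  · intro x y
    by_cases hxy : x = y
    · subst hxy; exact Or.inl le_rfl
    by_cases hyρ : y = ρ
    · rw [hyρ]
      -- y = ρ, x ≠ ρ
      have hxρ : x ≠ ρ := fun hc => hxy (hc.trans hyρ.symm)
      rw [hbdρ, hbdO ρ hρ]
      set B := (bd f (t ρ)).filter (fun h => 0 < v ρ h) with hB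
      have hBsub : B ⊆ bd f (t ρ) := Finset.filter_subset _ _
      have hgB : g ∉ B := by
        rw [hB]; intro hgB'
        exact hgrot ρ (by rw [hbdO ρ hρ]; exact hgB')
      by_cases hpx : 0 < v x g
      · rcases hpairs x hxρ hpx with ⟨hcl, hne⟩ | hmarg2
        · refine Or.inr ⟨g, Finset.mem_insert_self _ _, hpx, hcl, ?_⟩
          rw [Finset.erase_insert hgB]
          exact (ub_mono hv x hBsub).trans (hne.trans (hown x))
        · refine Or.inl ?_
          rw [ub_insert x hgB]
          have := ub_mono hv x hBsub
          linarith [hown x]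
      · have hvxg : v x g = 0 := le_antisymm (not_lt.1 hpx) (hv x g)
        rcases lift hv hf x (t ρ) hBsub (hown x) with hle | ⟨h, hh, hp, hcl, hle⟩
        · refine Or.inl ?_
          rw [ub_insert x hgB, hvxg]; linarith
        · refine Or.inr ⟨h, Finset.mem_insert_of_mem hh, hp, hcl, ?_⟩
          have hhg : g ≠ h := by rintro rfl; exact hgB hh
          rw [Finset.erase_insert_of_ne hhg, ub_insert x (fun hc => hgB (Finset.erase_subset _ _ hc)), hvxg, zero_add]
          exact hle
    · rw [hbdy y hyρ]
      by_cases hyO : y ∈ O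
      · rw [hbdO y hyO]
        exact lift hv hf x (t y) (Finset.filter_subset _ _) (hown x)
      · rw [hbdN y hyO]
        exact lift hv hf x y (Finset.Subset.refl _) (hown x)
  · refine Finset.sum_lt_sum (fun x _ => hown x) ⟨ρ, Finset.mem_univ ρ, hownρ⟩

end Moves

section Orbit

lemma exists_orbit (s : Fin n → Fin n) (k0 : Fin n) (Q : Fin n → Prop) (hQ0 : Q k0)
    (hQs : ∀ x, Q x → Q (s x)) :
    ∃ (O : Finset (Fin n)) (p : ℕ), 0 < p ∧ O.Nonempty ∧ (∀ w ∈ O, Q w) ∧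
      (∀ w ∈ O, s w ∈ O) ∧ (∀ w ∈ O, s^[p-1] w ∈ O) ∧
      (∀ w ∈ O, s^[p-1] (s w) = w) ∧ (∀ w ∈ O, s (s^[p-1] w) = w) := by
  have hQiter : ∀ (x : Fin n), Q x → ∀ r, Q (s^[r] x) := by
    intro x hx r
    induction r with
    | zero => simpa using hx
    | succ q ih => rw [Function.iterate_succ_apply']; exact hQs _ ih
  obtain ⟨a, ha, b, hb, hab, heq⟩ :=
    Finset.exists_ne_map_eq_of_card_lt_of_maps_to
      (s := Finset.range (n+1)) (t := (Finset.univ : Finset (Fin n)))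
      (by simp) (fun r _ => Finset.mem_univ (s^[r] k0))
  -- wlog a < b
  wlog hlt : a < b generalizing a b
  · exact this b hb a ha hab.symm heq.symm (by omega)
  set k1 := s^[a] k0 with hk1
  set p := b - a with hp'
  have hp : 0 < p := by omega
  have hper1 : s^[p] k1 = k1 := by
    rw [hk1, ← Function.iterate_add_apply]
    have : p + a = b := by omega
    rw [this, ← heq]
  set O := (Finset.range p).image (fun r => s^[r] k1) with hO
  have hQ1 : Q k1 := hQiter k0 hQ0 a
  have hmemO : ∀ w, w ∈ O ↔ ∃ r < p, s^[r] k1 = w := by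
    intro w; simp [hO]
  have hk1O : k1 ∈ O := (hmemO k1).2 ⟨0, hp, rfl⟩
  have hQall : ∀ w ∈ O, Q w := by
    intro w hw
    obtain ⟨r, _, hr⟩ := (hmemO w).1 hw
    exact hr ▸ hQiter k1 hQ1 r
  have hcl : ∀ w ∈ O, s w ∈ O := by
    intro w hw
    obtain ⟨r, hrp, hr⟩ := (hmemO w).1 hw
    subst hr
    rw [← Function.iterate_succ_apply' s r k1]
    show s^[r+1] k1 ∈ O
    by_cases hr1 : r + 1 < p
    · exact (hmemO _).2 ⟨r+1, hr1, rfl⟩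
    · have hre : r + 1 = p := by omega
      rw [hre, hper1]; exact hk1O
  have hper : ∀ w ∈ O, s^[p] w = w := by
    intro w hw
    obtain ⟨r, _, hr⟩ := (hmemO w).1 hw
    subst hr
    rw [← Function.iterate_add_apply, Nat.add_comm p r, Function.iterate_add_apply, hper1]
  have hclq : ∀ q, ∀ w ∈ O, s^[q] w ∈ O := by
    intro q
    induction q with
    | zero => intro w hw; simpa using hw
    | succ q ih =>
      intro w hw
      rw [Function.iterate_succ_apply']
      exact hcl _ (ih w hw)
  refine ⟨O, p, hp, ⟨k1, hk1O⟩, hQall, hcl, fun w hw => hclq (p-1) w hw, ?_, ?_⟩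
  · intro w hw
    rw [← Function.iterate_succ_apply s (p-1) w]
    show s^[p-1+1] w = w
    have hpe : p - 1 + 1 = p := by omega
    rw [hpe]; exact hper w hw
  · intro w hw
    rw [← Function.iterate_succ_apply' s (p-1) w]
    show s^[p-1+1] w = w
    have hpe : p - 1 + 1 = p := by omega
    rw [hpe]; exact hper w hw

end Orbit

section Main

variable {v : Fin n → Fin m → ℝ} {cls : Fin m → Option (Fin n)} {W : Finset (Fin m)}
  {f : Fin m → Option (Fin n)}

lemma no_cycle (hv : ∀ x g, 0 ≤ v x g) (hf : Inv v cls W f)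
    (hmax : ∀ f', Inv v cls W f' → Phi v f' ≤ Phi v f)
    {T : Finset (Fin n)} (hne : T.Nonempty)
    (hcyc : ∀ y ∈ T, ∃ x ∈ T, ub v x (bd f x) < ub v x (bd f y)) : False := by
  classical
  set e : Fin n → Fin n := fun y => if hy : y ∈ T then (hcyc y hy).choose else y with he
  have heT : ∀ y ∈ T, e y ∈ T ∧ ub v (e y) (bd f (e y)) < ub v (e y) (bd f y) := by
    intro y hy
    have := (hcyc y hy).choose_spec
    rw [he]; simp only [dif_pos hy]
    exact ⟨this.1, this.2⟩
  obtain ⟨k0, hk0⟩ := hne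
  obtain ⟨O, p, hp, hOne, hQall, hcl, hrm, hrt, htr⟩ :=
    exists_orbit e k0 (· ∈ T) hk0 (fun x hx => (heT x hx).1)
  obtain ⟨f', hf', hlt⟩ := rot_move (t := fun w => e^[p-1] w) (rmap := e) hv hf hOne
    hrm hcl htr hrt
    (by
      intro x hx
      have hmem : e^[p-1] x ∈ T := hQall _ (hrm x hx)
      have := (heT _ hmem).2
      rwa [htr x hx] at this)
  exact absurd (hmax f' hf') (not_le.2 hlt)

theorem core_exists (hv : ∀ x g, 0 ≤ v x g)
    (hcls : ∀ g i, cls g = some i → g ∈ W → 0 < v i g)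
    (hex : ∀ g ∈ W, ∃ x, 0 < v x g) :
    ∃ f, Inv v cls W f ∧ ∀ g ∈ W, (f g).isSome := by
  classical
  set S := (Finset.univ : Finset (Fin m → Option (Fin n))).filter (fun f => Inv v cls W f)
    with hS
  have hS0 : (fun _ => none : Fin m → Option (Fin n)) ∈ S := by
    rw [hS, Finset.mem_filter]
    refine ⟨Finset.mem_univ _, ?_, ?_⟩
    · intro g x h; exact absurd h (by simp)
    · intro x y
      have : bd (fun _ => none : Fin m → Option (Fin n)) y = ∅ := by
        ext h; simp [mem_bd]
      rw [this]
      have : bd (fun _ => none : Fin m → Option (Fin n)) x = ∅ := by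
        ext h; simp [mem_bd]
      rw [this]
      exact Or.inl le_rfl
  obtain ⟨f, hfS, hmax'⟩ := S.exists_max_image (Phi v) ⟨_, hS0⟩
  have hf : Inv v cls W f := (Finset.mem_filter.1 hfS).2
  have hmax : ∀ f', Inv v cls W f' → Phi v f' ≤ Phi v f := by
    intro f' hf'
    exact hmax' f' (by rw [hS, Finset.mem_filter]; exact ⟨Finset.mem_univ _, hf'⟩)
  refine ⟨f, hf, ?_⟩
  intro g hgW
  by_contra hns
  have hgf : f g = none := Option.not_isSome_iff_eq_none.1 hns
  -- insertion refuter
  have hins : ∀ k, 0 < v k g →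
      (∀ x, x ≠ k → 0 < v x g →
        (cls g ≠ some x ∧ ub v x (bd f k) ≤ ub v x (bd f x)) ∨
        (ub v x (bd f k) + v x g ≤ ub v x (bd f x))) → False := by
    intro k hk hcond
    obtain ⟨f', hf', hlt⟩ := gmov_move (O := {k}) (t := id) (rmap := id)
      hv hf (Finset.mem_singleton_self k)
      (fun w hw => hw) (fun w hw => hw)
      (fun w _ => rfl) (fun w _ => rfl)
      hgW hgf hk
      (by intro x hx hxk; rw [Finset.mem_singleton] at hx; exact absurd hx hxk)
      (by simp only [id_eq]; exact lt_add_of_pos_right _ hk)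
      (by simp only [id_eq]; exact hcond)
    exact absurd (hmax f' hf') (not_le.2 hlt)
  cases hclsg : cls g with
  | none =>
    have hclaim : ∃ k, 0 < v k g ∧ ∀ x, 0 < v x g →
        ¬ ub v x (bd f x) < ub v x (bd f k) := by
      by_contra hno
      push_neg at hno
      have hT : ∀ y ∈ Finset.univ.filter (fun x => 0 < v x g),
          ∃ x ∈ Finset.univ.filter (fun x => 0 < v x g),
            ub v x (bd f x) < ub v x (bd f y) := by
        intro y hy
        rw [Finset.mem_filter] at hy
        obtain ⟨x, hx, hxe⟩ := hno y hy.2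
        exact ⟨x, Finset.mem_filter.2 ⟨Finset.mem_univ _, hx⟩, hxe⟩
      obtain ⟨x0, hx0⟩ := hex g hgW
      exact no_cycle hv hf hmax ⟨x0, Finset.mem_filter.2 ⟨Finset.mem_univ _, hx0⟩⟩ hT
    obtain ⟨k, hk, hnoenv⟩ := hclaim
    exact hins k hk (fun x hxk hpx =>
      Or.inl ⟨by rw [hclsg]; simp, not_lt.1 (hnoenv x hpx)⟩)
  | some i =>
    have hvi : 0 < v i g := hcls g i hclsg hgW
    have hclsne : ∀ x : Fin n, x ≠ i → cls g ≠ some x := by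
      intro x hx hc
      rw [hclsg] at hc
      exact hx (Option.some.inj hc).symm
    by_cases hienv : ∃ x, 0 < v x g ∧ ub v x (bd f x) < ub v x (bd f i)
    · obtain ⟨i1, hpi1, henv1⟩ := hienv
      have hi1ne : i1 ≠ i := by rintro rfl; exact lt_irrefl _ henv1
      set envy : Fin n → Fin n → Prop := fun a b => ub v a (bd f a) < ub v a (bd f b)
        with henvy
      set Vs := Finset.univ.filter
        (fun x => x ≠ i ∧ 0 < v x g ∧ Relation.ReflTransGen envy x i) with hVs
      have hV1 : i1 ∈ Vs := Finset.mem_filter.2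
        ⟨Finset.mem_univ _, hi1ne, hpi1, Relation.ReflTransGen.single henv1⟩
      have hsrc : ∃ y ∈ Vs, ∀ x ∈ Vs, ¬ envy x y := by
        by_contra hno
        push_neg at hno
        exact no_cycle hv hf hmax ⟨i1, hV1⟩ hno
      obtain ⟨ys, hysV, hysrc⟩ := hsrc
      obtain ⟨-, hyne, hpy, hyR⟩ := Finset.mem_filter.1 hysV
      have hnotenvy : ∀ x, 0 < v x g → x ≠ i → ¬ envy x ys := by
        intro x hpx hxi hxe
        exact hysrc x (Finset.mem_filter.2 ⟨Finset.mem_univ _, hxi, hpx,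
          Relation.ReflTransGen.head hxe hyR⟩) hxe
      have hmarg : ub v i (bd f i) < ub v i (bd f ys) + v i g := by
        by_contra hc
        push_neg at hc
        refine hins ys hpy ?_
        intro x hxys hpx
        by_cases hxi : x = i
        · subst hxi; exact Or.inr hc
        · exact Or.inl ⟨hclsne x hxi, not_lt.1 (hnotenvy x hpx hxi)⟩
      have hstep : ∀ x, x ≠ i → Relation.ReflTransGen envy x i →
          ∃ z, envy x z ∧ Relation.ReflTransGen envy z i := by
        intro x hxi hR
        rcases hR.cases_head with hc | hc
        · exact absurd hc hxi
        · exact hc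
      set s : Fin n → Fin n := fun x =>
        if hx : x = i then ys
        else if hR : Relation.ReflTransGen envy x i then (hstep x hx hR).choose else x
        with hsdef
      have hsi : s i = ys := by rw [hsdef]; simp
      have hQs : ∀ x, Relation.ReflTransGen envy x i →
          Relation.ReflTransGen envy (s x) i := by
        intro x hR
        by_cases hx : x = i
        · subst hx; rw [hsi]; exact hyR
        · rw [hsdef]; simp only [dif_neg hx, dif_pos hR]
          exact (hstep x hx hR).choose_spec.2
      have hsenv : ∀ x, Relation.ReflTransGen envy x i → x ≠ i → envy x (s x) := by
        intro x hR hx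
        rw [hsdef]; simp only [dif_neg hx, dif_pos hR]
        exact (hstep x hx hR).choose_spec.1
      obtain ⟨O, p, hp, hOne, hQall, hcl, hrm, hrt, htr⟩ :=
        exists_orbit s i (fun x => Relation.ReflTransGen envy x i)
          Relation.ReflTransGen.refl hQs
      by_cases hiO : i ∈ O
      · obtain ⟨f', hf', hlt⟩ := gmov_move (O := O) (t := s) (rmap := fun w => s^[p-1] w)
          hv hf hiO hcl hrm hrt htr hgW hgf hvi
          (fun x hx hxi => hsenv x (hQall x hx) hxi)
          (by rw [hsi]; exact hmarg)
          (by
            intro x hxi hpx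
            refine Or.inl ⟨hclsne x hxi, ?_⟩
            rw [hsi]
            exact not_lt.1 (hnotenvy x hpx hxi))
        exact absurd (hmax f' hf') (not_le.2 hlt)
      · obtain ⟨f', hf', hlt⟩ := rot_move (O := O) (t := s) (rmap := fun w => s^[p-1] w)
          hv hf hOne hcl hrm hrt htr
          (fun x hx => hsenv x (hQall x hx) (fun hc => hiO (hc ▸ hx)))
        exact absurd (hmax f' hf') (not_le.2 hlt)
    · push_neg at hienv
      exact hins i hvi (fun x hxi hpx =>
        Or.inl ⟨hclsne x hxi, hienv x hpx⟩)

end Main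

end EF1MAux


-- Part 2 skeleton (to be appended after FairDivision defs + core)
namespace FairDivision
variable {n m : ℕ}

lemma frUtil_one (I : FairDivision n m) (i : Fin n) (g : Fin m) :
    I.frUtil i g 1 = I.v i g := by
  unfold frUtil; split <;> simp

lemma frUtil_zero (I : FairDivision n m) (i : Fin n) (g : Fin m) :
    I.frUtil i g 0 = 0 := by
  unfold frUtil
  split
  · ring
  · rw [if_neg]; exact zero_ne_one

lemma frUtil_nonneg (I : FairDivision n m) (i : Fin n) (g : Fin m) {t : ℝ} (ht : 0 ≤ t) :
    0 ≤ I.frUtil i g t := by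
  unfold frUtil
  split
  · exact mul_nonneg ht (I.v_nonneg i g)
  · split
    · exact I.v_nonneg i g
    · exact le_rfl

lemma frUtil_ne_one (I : FairDivision n m) (i : Fin n) (g : Fin m) {t : ℝ} (ht : t ≠ 1) :
    I.frUtil i g t = if I.divisible i g then t * I.v i g else 0 := by
  unfold frUtil
  by_cases hd : I.divisible i g
  · rw [if_pos hd, if_pos hd]
  · rw [if_neg hd, if_neg hd, if_neg ht]

lemma utilMinus_eq (I : FairDivision n m) (i : Fin n) (b : Fin m → ℝ) (g : Fin m) :
    I.utilMinus i b g = I.util i b - I.frUtil i g (b g) := by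
  unfold utilMinus util
  have := Finset.sum_erase_add Finset.univ (fun g' => I.frUtil i g' (b g')) (Finset.mem_univ g)
  linarith

end FairDivision


/-- Every instance (with every good positively valued by some agent, and every
good an agent regards as divisible positively valued by that agent) admits a complete
allocation that is both EF1M and non-wasteful. -/
theorem ef1m_nonwasteful_exists (n m : ℕ) (I : FairDivision n m)
    (hpos : ∀ g, ∃ i, 0 < I.v i g)
    (hdiv : ∀ i g, I.divisible i g → 0 < I.v i g) :
    ∃ x, I.IsAllocation x ∧ I.EF1M x ∧ I.NonWasteful x := by
  classical
  set Sg : Fin m → Finset (Fin n) := fun g => Finset.univ.filter (fun i => I.divisible i g)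
    with hSg
  set c : Fin m → ℕ := fun g => (Sg g).card with hcdef
  set W : Finset (Fin m) := Finset.univ.filter (fun g => ¬ 2 ≤ c g) with hWdef
  set cls : Fin m → Option (Fin n) := fun g =>
    if h : ∃ i, I.divisible i g then some h.choose else none with hclsdef
  have hmemSg : ∀ (i : Fin n) (g : Fin m), i ∈ Sg g ↔ I.divisible i g := by
    intro i g; simp [hSg]
  have hclsdiv : ∀ g i, cls g = some i → I.divisible i g := by
    intro g i hgi
    rw [hclsdef] at hgi
    dsimp only at hgi
    split at hgi
    · rename_i h
      have hs := h.choose_spec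
      rwa [← Option.some.inj hgi]
    · exact absurd hgi (by simp)
  have hdivcls : ∀ g ∈ W, ∀ i, I.divisible i g → cls g = some i := by
    intro g hgW i hdi
    have hexg : ∃ i', I.divisible i' g := ⟨i, hdi⟩
    rw [hclsdef]
    dsimp only
    rw [dif_pos hexg]
    congr 1
    have h1 : hexg.choose ∈ Sg g := (hmemSg _ _).2 hexg.choose_spec
    have h2 : i ∈ Sg g := (hmemSg _ _).2 hdi
    have hcard : (Sg g).card ≤ 1 := by
      have h3 : ¬ 2 ≤ (Sg g).card := (Finset.mem_filter.1 hgW).2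
      omega
    exact Finset.card_le_one.1 hcard _ h1 _ h2
  obtain ⟨f, hfInv, hfc⟩ := EF1MAux.core_exists (v := I.v) (cls := cls) (W := W)
    I.v_nonneg (fun g i hgi _ => hdiv i g (hclsdiv g i hgi)) (fun g _ => hpos g)
  set x : Fin n → Fin m → ℝ := fun a g =>
    if 2 ≤ c g then (if I.divisible a g then ((c g : ℝ))⁻¹ else 0)
    else (if f g = some a then 1 else 0) with hxdef
  have hc2 : ∀ g, 2 ≤ c g → 0 < ((c g : ℝ))⁻¹ ∧ ((c g : ℝ))⁻¹ < 1 := by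
    intro g hg
    have h2 : (2 : ℝ) ≤ (c g : ℝ) := by exact_mod_cast hg
    have hpos0 : (0 : ℝ) < (c g : ℝ) := by linarith
    constructor
    · exact inv_pos.2 hpos0
    · rw [← one_div, div_lt_one hpos0]; linarith
  have hxF : ∀ a g, 2 ≤ c g → x a g = if I.divisible a g then ((c g : ℝ))⁻¹ else 0 := by
    intro a g hg; rw [hxdef]; dsimp only; rw [if_pos hg]
  have hxW : ∀ a g, ¬ 2 ≤ c g → x a g = if f g = some a then 1 else 0 := by
    intro a g hg; rw [hxdef]; dsimp only; rw [if_neg hg]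
  have hx01 : ∀ a g, 0 ≤ x a g ∧ x a g ≤ 1 := by
    intro a g
    by_cases hg : 2 ≤ c g
    · rw [hxF a g hg]
      by_cases hd : I.divisible a g
      · rw [if_pos hd]; exact ⟨(hc2 g hg).1.le, (hc2 g hg).2.le⟩
      · rw [if_neg hd]; norm_num
    · rw [hxW a g hg]
      by_cases hf : f g = some a
      · rw [if_pos hf]; norm_num
      · rw [if_neg hf]; norm_num
  have hfrF : ∀ i j g, 2 ≤ c g →
      I.frUtil i g (x j g) = if I.divisible i g then x j g * I.v i g else 0 := by
    intro i j g hg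
    apply I.frUtil_ne_one
    rw [hxF j g hg]
    by_cases hd : I.divisible j g
    · rw [if_pos hd]; exact ne_of_lt (hc2 g hg).2
    · rw [if_neg hd]; exact zero_ne_one
  have hfrW : ∀ i j g, ¬ 2 ≤ c g →
      I.frUtil i g (x j g) = if f g = some j then I.v i g else 0 := by
    intro i j g hg
    rw [hxW j g hg]
    by_cases hfj : f g = some j
    · rw [if_pos hfj, if_pos hfj, I.frUtil_one]
    · rw [if_neg hfj, if_neg hfj, I.frUtil_zero]
  -- decomposition of util
  have hAsub : ∀ j h, f h = some j → ¬ 2 ≤ c h := by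
    intro j h hf
    have := (hfInv.elig h j hf).1
    exact (Finset.mem_filter.1 this).2
  have hsplit : ∀ i j, I.util i (x j) =
      (∑ g ∈ Finset.univ.filter (fun g => 2 ≤ c g), I.frUtil i g (x j g)) +
        EF1MAux.ub I.v i (EF1MAux.bd f j) := by
    intro i j
    unfold FairDivision.util
    rw [← Finset.sum_filter_add_sum_filter_not Finset.univ (fun g => 2 ≤ c g)
      (fun g => I.frUtil i g (x j g))]
    congr 1
    have hstep : ∀ g ∈ Finset.univ.filter (fun g => ¬ 2 ≤ c g),
        I.frUtil i g (x j g) = if f g = some j then I.v i g else 0 := by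
      intro g hg
      exact hfrW i j g (Finset.mem_filter.1 hg).2
    rw [Finset.sum_congr rfl hstep, ← Finset.sum_filter]
    have hset : (Finset.univ.filter (fun g => ¬ 2 ≤ c g)).filter (fun g => f g = some j) =
        EF1MAux.bd f j := by
      ext h
      simp only [Finset.mem_filter, Finset.mem_univ, true_and, EF1MAux.mem_bd]
      constructor
      · rintro ⟨_, hf⟩; exact hf
      · intro hf; exact ⟨hAsub j h hf, hf⟩
    rw [hset]
    rfl
  have hD : ∀ i j, (∑ g ∈ Finset.univ.filter (fun g => 2 ≤ c g), I.frUtil i g (x j g)) ≤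
      (∑ g ∈ Finset.univ.filter (fun g => 2 ≤ c g), I.frUtil i g (x i g)) := by
    intro i j
    refine Finset.sum_le_sum ?_
    intro g hg
    have hgF : 2 ≤ c g := (Finset.mem_filter.1 hg).2
    rw [hfrF i j g hgF, hfrF i i g hgF]
    by_cases hdi : I.divisible i g
    · rw [if_pos hdi, if_pos hdi]
      have hxi : x i g = ((c g : ℝ))⁻¹ := by rw [hxF i g hgF, if_pos hdi]
      have hxj : x j g ≤ ((c g : ℝ))⁻¹ := by
        rw [hxF j g hgF]
        by_cases hdj : I.divisible j g
        · rw [if_pos hdj]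
        · rw [if_neg hdj]; exact (hc2 g hgF).1.le
      rw [hxi]
      exact mul_le_mul_of_nonneg_right hxj (I.v_nonneg i g)
    · rw [if_neg hdi, if_neg hdi]
  refine ⟨x, ⟨hx01, ?_⟩, ?_, ?_⟩
  · -- sums to one
    intro g
    by_cases hg : 2 ≤ c g
    · have hrw : ∀ i : Fin n, x i g = if i ∈ Sg g then ((c g : ℝ))⁻¹ else 0 := by
        intro i
        rw [hxF i g hg]
        by_cases hd : I.divisible i g
        · rw [if_pos hd, if_pos ((hmemSg i g).2 hd)]
        · rw [if_neg hd, if_neg (fun hc => hd ((hmemSg i g).1 hc))]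
      rw [Finset.sum_congr rfl (fun i _ => hrw i), Finset.sum_ite_mem,
        Finset.univ_inter, Finset.sum_const, nsmul_eq_mul]
      have : ((c g : ℝ)) ≠ 0 := by
        have : (2:ℝ) ≤ (c g : ℝ) := by exact_mod_cast hg
        linarith
      show ((c g : ℝ)) * ((c g : ℝ))⁻¹ = 1
      exact mul_inv_cancel₀ this
    · have hgW : g ∈ W := Finset.mem_filter.2 ⟨Finset.mem_univ _, hg⟩
      obtain ⟨a0, ha0⟩ := Option.isSome_iff_exists.1 (hfc g hgW)
      have hrw : ∀ i : Fin n, x i g = if a0 = i then 1 else 0 := by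
        intro i
        rw [hxW i g hg, ha0]
        by_cases hai : a0 = i
        · rw [if_pos (by rw [hai]), if_pos hai]
        · rw [if_neg (fun hc => hai (Option.some.inj hc)), if_neg hai]
      rw [Finset.sum_congr rfl (fun i _ => hrw i), Finset.sum_ite_eq]
      simp
  · -- EF1M
    intro i j
    constructor
    · intro htrig
      by_cases hij : i = j
      · subst hij
        obtain ⟨g0, hx0, hnd0, hv0⟩ := htrig
        refine ⟨g0, hx0, hnd0, hv0, ?_⟩
        rw [I.utilMinus_eq]
        have := I.frUtil_nonneg i g0 (hx01 i g0).1
        linarith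
      · rcases hfInv.efp i j with hfull | ⟨h, hhA, hph, hclw, hle⟩
        · obtain ⟨g0, hx0, hnd0, hv0⟩ := htrig
          refine ⟨g0, hx0, hnd0, hv0, ?_⟩
          rw [I.utilMinus_eq, hsplit i j, hsplit i i]
          have h1 := I.frUtil_nonneg i g0 (hx01 j g0).1
          have h2 := hD i j
          linarith
        · have hfh : f h = some j := EF1MAux.mem_bd.1 hhA
          have hhW : h ∈ W := (hfInv.elig h j hfh).1
          have hhc : ¬ 2 ≤ c h := (Finset.mem_filter.1 hhW).2
          have hxh : x j h = 1 := by rw [hxW j h hhc, if_pos hfh]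
          have hndh : ¬ I.divisible i h := fun hd => hclw (hdivcls h hhW i hd)
          refine ⟨h, by rw [hxh]; norm_num, hndh, hph, ?_⟩
          rw [I.utilMinus_eq, hsplit i j, hsplit i i]
          have hfr : I.frUtil i h (x j h) = I.v i h := by rw [hxh, I.frUtil_one]
          rw [hfr]
          have herase := EF1MAux.ub_erase (v := I.v) i hhA
          have h2 := hD i j
          linarith
    · intro hno
      by_cases hij : i = j
      · subst hij; exact le_rfl
      · have hAle : EF1MAux.ub I.v i (EF1MAux.bd f j) ≤ EF1MAux.ub I.v i (EF1MAux.bd f i) := by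
          rcases hfInv.efp i j with hfull | ⟨h, hhA, hph, hclw, hle⟩
          · exact hfull
          · exfalso
            have hfh : f h = some j := EF1MAux.mem_bd.1 hhA
            have hhW : h ∈ W := (hfInv.elig h j hfh).1
            have hhc : ¬ 2 ≤ c h := (Finset.mem_filter.1 hhW).2
            have hxh : 0 < x j h := by rw [hxW j h hhc, if_pos hfh]; norm_num
            have hdi : I.divisible i h := by
              by_contra hnd
              exact hno ⟨h, hxh, hnd, hph⟩
            exact hclw (hdivcls h hhW i hdi)
        rw [hsplit i j, hsplit i i]
        have := hD i j
        linarith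
  · -- NonWasteful
    intro i g hxpos
    by_cases hgF : 2 ≤ c g
    · have hdi : I.divisible i g := by
        by_contra hnd
        rw [hxF i g hgF, if_neg hnd] at hxpos
        exact lt_irrefl 0 hxpos
      rw [hfrF i i g hgF, if_pos hdi]
      have hxi : x i g = ((c g : ℝ))⁻¹ := by rw [hxF i g hgF, if_pos hdi]
      rw [hxi]
      exact mul_pos (hc2 g hgF).1 (hdiv i g hdi)
    · have hfi : f g = some i := by
        by_contra hns
        rw [hxW i g hgF, if_neg hns] at hxpos
        exact lt_irrefl 0 hxpos
      have hxi : x i g = 1 := by rw [hxW i g hgF, if_pos hfi]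
      rw [hxi, I.frUtil_one]
      exact (hfInv.elig g i hfi).2
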